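/- arXiv:2111.02253 — 10 statements merged into one kernel-verified Lean document; each statement's English description precedes it below -/
import Mathlib

section
/- Let G = T_1 × ... × T_r where each T_i is a finite nonabelian simple group, and suppose that for each i ≤ r, T_i is not isomorphic to a section of the product ∏_{j≠i} T_j. If H ≤ G is a subgroup having T_i as a section, then H contains the i-th direct factor T̂_i = 1 × ... × T_i × ... × 1. -/
/-- `S` is (isomorphic to) a section of `X`, i.e. there are subgroups `L ⊴ H ≤ X`
with `H/L ≅ S`; equivalently there is a surjective homomorphism from a subgroup of `X` onto `S`. -/
def IsSectionOf (S X : Type*) [Group S] [Group X] : Prop :=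
  ∃ (H : Subgroup X) (f : H →* S), Function.Surjective f

/-- Let `G = T 1 × ... × T r` with each `T i` a finite nonabelian simple group such that
`T i` is not a section of `∏_{j ≠ i} T j`.  If `H ≤ G` has `T i` as a section, then `H`
contains the `i`-th direct factor `T̂ i` (all elements whose coordinates away from `i`
are trivial). -/
theorem stmt1 {r : ℕ} (T : Fin r → Type*) [∀ i, Group (T i)] [∀ i, Finite (T i)]
    (hsimple : ∀ i, IsSimpleGroup (T i))
    (hnonab : ∀ i, ∃ a b : T i, a * b ≠ b * a)
    (hsec : ∀ i, ¬ IsSectionOf (T i) (∀ j : {j : Fin r // j ≠ i}, T j.1))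
    (H : Subgroup (∀ i, T i)) (i : Fin r)
    (hHi : IsSectionOf (T i) H) :
    ∀ g : (∀ j, T j), (∀ j, j ≠ i → g j = 1) → g ∈ H := by
  obtain ⟨K, f, hf⟩ := hHi
  -- transfer K to a subgroup of the full product
  let K' : Subgroup (∀ j, T j) := K.map H.subtype
  let e : K ≃* K' := K.equivMapOfInjective H.subtype H.subtype_injective
  let f' : (K' : Type _) →* T i := f.comp e.symm.toMonoidHom
  have hf' : Function.Surjective f' := hf.comp e.symm.surjective
  have hK'H : K' ≤ H := by
    rintro x ⟨y, _, rfl⟩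
    exact (y : H).2
  -- projection away from coordinate i
  let π : (∀ j, T j) →* (∀ j : {j : Fin r // j ≠ i}, T j.1) :=
    Pi.monoidHom fun j => Pi.evalMonoidHom T j.1
  let φ : (K' : Type _) →* (∀ j : {j : Fin r // j ≠ i}, T j.1) := π.comp K'.subtype
  let N : Subgroup (K' : Type _) := φ.ker
  have hmemN : ∀ x : (K' : Type _), x ∈ N ↔ ∀ j, j ≠ i → (x : ∀ j, T j) j = 1 := by
    intro x
    constructor
    · intro hx j hj
      have := congrFun (MonoidHom.mem_ker.mp hx) ⟨j, hj⟩
      exact this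
    · intro hx
      refine MonoidHom.mem_ker.mpr ?_
      funext j
      exact hx j.1 j.2
  have hPnormal : (N.map f').Normal :=
    Subgroup.Normal.map (by infer_instance) f' hf'
  rcases (hsimple i).eq_bot_or_eq_top_of_normal (N.map f') hPnormal with hbot | htop
  · -- f' kills N = ker φ, so T i is a section of the complementary product
    exfalso
    apply hsec i
    have hker : ∀ x : (K' : Type _), x ∈ φ.ker → f' x = 1 := by
      intro x hx
      have : f' x ∈ N.map f' := ⟨x, hx, rfl⟩
      rw [hbot] at this
      exact this
    refine ⟨φ.range, ?_, ?_⟩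
    · exact (QuotientGroup.lift φ.ker f' hker).comp
        (QuotientGroup.quotientKerEquivRange φ).symm.toMonoidHom
    · have h1 : Function.Surjective (QuotientGroup.lift φ.ker f' hker) := by
        intro t
        obtain ⟨x, hx⟩ := hf' t
        exact ⟨QuotientGroup.mk x, hx⟩
      exact h1.comp (QuotientGroup.quotientKerEquivRange φ).symm.surjective
  · -- N surjects onto T i; evaluation at i is injective on N hence bijective
    let ev : (N : Type _) →* T i :=
      (Pi.evalMonoidHom T i).comp (K'.subtype.comp N.subtype)
    have hev_inj : Function.Injective ev := by
      rw [injective_iff_map_eq_one]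
      intro x hx
      have hxN := (hmemN x.1).mp x.2
      have : ((x : (K' : Type _)) : ∀ j, T j) = 1 := by
        funext j
        by_cases hj : j = i
        · subst hj; exact hx
        · exact hxN j hj
      ext j
      exact congrFun this j
    have hgN : Function.Surjective (fun x : (N : Type _) => f' x) := by
      intro t
      have : t ∈ N.map f' := by rw [htop]; trivial
      obtain ⟨x, hx, hfx⟩ := this
      exact ⟨⟨x, hx⟩, hfx⟩
    have hcard1 : Nat.card (T i) ≤ Nat.card (N : Type _) :=
      Nat.card_le_card_of_surjective _ hgN
    have hcard2 : Nat.card (N : Type _) ≤ Nat.card (T i) :=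
      Nat.card_le_card_of_injective _ hev_inj
    have hev_bij : Function.Bijective ev :=
      (Nat.bijective_iff_injective_and_card ev).mpr ⟨hev_inj, le_antisymm hcard2 hcard1⟩
    intro g hg
    obtain ⟨x, hx⟩ := hev_bij.2 (g i)
    have hxN := (hmemN x.1).mp x.2
    have hxg : ((x : (K' : Type _)) : ∀ j, T j) = g := by
      funext j
      by_cases hj : j = i
      · subst hj; exact hx
      · rw [hxN j hj, hg j hj]
    have : ((x : (K' : Type _)) : ∀ j, T j) ∈ K' := (x : (K' : Type _)).2
    rw [hxg] at this
    exact hK'H this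
end

section
/- Let G = T_1 × ... × T_r where each T_i is a finite nonabelian simple group, such that for each i, T_i is not a section of ∏_{j≠i} T_j, and such that no T_i admits a nontrivial factorisation. If G = HK with H and K proper subgroups of G, then Core_G(H) ≠ 1 and Core_G(K) ≠ 1. -/
theorem isSectionOf_of_injective_of_surjective {S X W : Type*} [Group S] [Group X] [Group W]
    {f : W →* X} (hf : Function.Injective f) {g : W →* S} (hg : Function.Surjective g) :
    IsSectionOf S X :=
  ⟨f.range, g.comp (MonoidHom.ofInjective hf).symm.toMonoidHom,
    hg.comp (MonoidHom.ofInjective hf).symm.surjective⟩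

theorem Subgroup.exists_mul_map_of_surjective {G Q : Type*} [Group G] [Group Q] {f : G →* Q}
    (hf : Function.Surjective f) {H K : Subgroup G} (hHK : ∀ g : G, ∃ h ∈ H, ∃ k ∈ K, g = h * k)
    (x : Q) : ∃ a ∈ H.map f, ∃ b ∈ K.map f, x = a * b := by
  obtain ⟨g, rfl⟩ := hf x
  obtain ⟨h, hh, k, hk, rfl⟩ := hHK g
  exact ⟨f h, mem_map_of_mem f hh, f k, mem_map_of_mem f hk, map_mul f h k⟩

namespace Pi

variable {ι : Type*} [DecidableEq ι] {T : ι → Type*} [∀ i, Group (T i)]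

theorem evalMonoidHom_surjective (i : ι) : Function.Surjective (Pi.evalMonoidHom T i) :=
  fun t => ⟨Pi.mulSingle i t, Pi.mulSingle_eq_same i t⟩

theorem conj_mulSingle (g : ∀ i, T i) (i : ι) (x : T i) :
    g * Pi.mulSingle i x * g⁻¹ = Pi.mulSingle i (g i * x * (g i)⁻¹) := by
  funext j
  by_cases hj : j = i
  · subst hj
    simp
  · simp [Pi.mulSingle_eq_of_ne hj]

theorem mulSingle_eval_eq_of_forall_ne_eq_one {g : ∀ i, T i} {i : ι} (hg : ∀ j, j ≠ i → g j = 1) :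
    Pi.mulSingle i (g i) = g := by
  funext j
  by_cases hj : j = i
  · subst hj
    simp
  · rw [Pi.mulSingle_eq_of_ne hj, hg j hj]

end Pi

namespace Subgroup

variable {ι : Type*} [DecidableEq ι] {T : ι → Type*} [∀ i, Group (T i)]

theorem mulSingle_mem_of_map_evalMonoidHom_eq_top {i : ι} (hsimple : IsSimpleGroup (T i))
    (hsec : ¬ IsSectionOf (T i) (∀ j : {j : ι // j ≠ i}, T j.1)) {W : Subgroup (∀ i, T i)}
    (hW : W.map (Pi.evalMonoidHom T i) = ⊤) (t : T i) : Pi.mulSingle i t ∈ W := by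
  have hsurj (x : T i) : ∃ w ∈ W, w i = x := by
    simpa using (hW ▸ mem_top x : x ∈ W.map (Pi.evalMonoidHom T i))
  have hnormal : (W.comap (MonoidHom.mulSingle T i)).Normal := by
    refine ⟨fun s hs x => ?_⟩
    obtain ⟨w, hw, rfl⟩ := hsurj x
    have := W.mul_mem (W.mul_mem hw hs) (W.inv_mem hw)
    rwa [MonoidHom.mulSingle_apply, Pi.conj_mulSingle] at this
  rcases hsimple.eq_bot_or_eq_top_of_normal _ hnormal with hbot | htop
  · let deleteCoord : (∀ i, T i) →* ∀ j : {j : ι // j ≠ i}, T j.1 :=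
      MonoidHom.pi fun j => Pi.evalMonoidHom T j.1
    have hinj : Function.Injective (deleteCoord.comp W.subtype) := by
      rw [injective_iff_map_eq_one]
      rintro ⟨w, hw⟩ hw1
      have hrest : ∀ j, j ≠ i → w j = 1 := fun j hj => congrFun hw1 ⟨j, hj⟩
      have hwi : w i ∈ W.comap (MonoidHom.mulSingle T i) := by
        rwa [mem_comap, MonoidHom.mulSingle_apply, Pi.mulSingle_eval_eq_of_forall_ne_eq_one hrest]
      rw [hbot, mem_bot] at hwi
      refine Subtype.ext (show w = 1 from ?_)
      rw [← Pi.mulSingle_eval_eq_of_forall_ne_eq_one hrest, hwi, Pi.mulSingle_one]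
    refine absurd (isSectionOf_of_injective_of_surjective hinj
      (g := (Pi.evalMonoidHom T i).comp W.subtype) fun x => ?_) hsec
    obtain ⟨w, hw, rfl⟩ := hsurj x
    exact ⟨⟨w, hw⟩, rfl⟩
  · exact (htop ▸ mem_top t : t ∈ W.comap _)

theorem eq_top_of_forall_map_evalMonoidHom_eq_top [Finite ι] (hsimple : ∀ i, IsSimpleGroup (T i))
    (hsec : ∀ i, ¬ IsSectionOf (T i) (∀ j : {j : ι // j ≠ i}, T j.1)) {W : Subgroup (∀ i, T i)}
    (hW : ∀ i, W.map (Pi.evalMonoidHom T i) = ⊤) : W = ⊤ :=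
  eq_top_iff' W |>.mpr fun g => pi_mem_of_mulSingle_mem g fun i =>
    mulSingle_mem_of_map_evalMonoidHom_eq_top (hsimple i) (hsec i) (hW i) (g i)

theorem normalCore_ne_bot_of_forall_mulSingle_mem {i : ι} [Nontrivial (T i)]
    {W : Subgroup (∀ i, T i)} (hW : ∀ t : T i, Pi.mulSingle i t ∈ W) : W.normalCore ≠ ⊥ := by
  obtain ⟨t, ht⟩ := exists_ne (1 : T i)
  have hcore : Pi.mulSingle i t ∈ W.normalCore := fun g => by
    rw [Pi.conj_mulSingle]
    exact hW _
  exact fun hbot => ht (Pi.mulSingle_eq_one_iff.mp ((mem_bot.mp (hbot ▸ hcore))))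

end Subgroup

theorem stmt2_general {r : ℕ} (T : Fin r → Type*) [∀ i, Group (T i)]
    (hsimple : ∀ i, IsSimpleGroup (T i))
    (hsec : ∀ i, ¬ IsSectionOf (T i) (∀ j : {j : Fin r // j ≠ i}, T j.1))
    (hfact : ∀ i, ¬ ∃ A B : Subgroup (T i), A ≠ ⊤ ∧ B ≠ ⊤ ∧
      ∀ x : T i, ∃ a ∈ A, ∃ b ∈ B, x = a * b)
    (H K : Subgroup (∀ i, T i)) (hH : H ≠ ⊤) (hK : K ≠ ⊤)
    (hHK : ∀ g : ∀ i, T i, ∃ h ∈ H, ∃ k ∈ K, g = h * k) :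
    H.normalCore ≠ ⊥ ∧ K.normalCore ≠ ⊥ := by
  have hcover : ∀ i, H.map (Pi.evalMonoidHom T i) = ⊤ ∨ K.map (Pi.evalMonoidHom T i) = ⊤ := by
    intro i
    by_contra! h
    exact hfact i ⟨_, _, h.1, h.2,
      Subgroup.exists_mul_map_of_surjective (Pi.evalMonoidHom_surjective i) hHK⟩
  have hcore : ∀ W : Subgroup (∀ i, T i),
      (∃ i, W.map (Pi.evalMonoidHom T i) = ⊤) → W.normalCore ≠ ⊥ := by
    rintro W ⟨i, hi⟩
    have := (hsimple i).toNontrivial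
    exact Subgroup.normalCore_ne_bot_of_forall_mulSingle_mem
      (Subgroup.mulSingle_mem_of_map_evalMonoidHom_eq_top (hsimple i) (hsec i) hi)
  refine ⟨hcore H ?_, hcore K ?_⟩
  · by_contra! h
    exact hK (Subgroup.eq_top_of_forall_map_evalMonoidHom_eq_top hsimple hsec
      fun i => (hcover i).resolve_left (h i))
  · by_contra! h
    exact hH (Subgroup.eq_top_of_forall_map_evalMonoidHom_eq_top hsimple hsec
      fun i => (hcover i).resolve_right (h i))

/-- Let `G = T 1 × ... × T r` with each `T i` a finite nonabelian simple group such that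
`T i` is not a section of `∏_{j ≠ i} T j` and no `T i` admits a nontrivial factorisation.
If `G = H * K` with `H` and `K` proper subgroups, then the normal cores of `H` and `K`
in `G` are both nontrivial. -/
theorem stmt2 {r : ℕ} (T : Fin r → Type*) [∀ i, Group (T i)] [∀ i, Finite (T i)]
    (hsimple : ∀ i, IsSimpleGroup (T i))
    (hnonab : ∀ i, ∃ a b : T i, a * b ≠ b * a)
    (hsec : ∀ i, ¬ IsSectionOf (T i) (∀ j : {j : Fin r // j ≠ i}, T j.1))
    (hfact : ∀ i, ¬ ∃ A B : Subgroup (T i), A ≠ ⊤ ∧ B ≠ ⊤ ∧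
      ∀ x : T i, ∃ a ∈ A, ∃ b ∈ B, x = a * b)
    (H K : Subgroup (∀ i, T i)) (hH : H ≠ ⊤) (hK : K ≠ ⊤)
    (hHK : ∀ g : ∀ i, T i, ∃ h ∈ H, ∃ k ∈ K, g = h * k) :
    H.normalCore ≠ ⊥ ∧ K.normalCore ≠ ⊥ :=
  stmt2_general T hsimple hsec hfact H K hH hK hHK
end

section
/- Let p be a prime and let X_1, ..., X_t be finite groups, each acting faithfully and transitively on a finite set of p-power size. If X is a subdirect subgroup of X_1 × ... × X_t, then the Fitting subgroup F(X) is a (possibly trivial) p-group. -/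
/-- The Fitting subgroup of a group: the join of all nilpotent normal subgroups. -/
def fittingSubgroup (G : Type*) [Group G] : Subgroup G :=
  ⨆ (N : Subgroup G) (_ : N.Normal ∧ Group.IsNilpotent N), N

open Pointwise

/-- In a faithful transitive action on a set of `p`-power size, any normal `q`-subgroup
(with `q ≠ p` prime) is trivial. -/
theorem aux_normal_qgroup_eq_bot {p q : ℕ} (hp : p.Prime) (hq : q.Prime) (hne : q ≠ p)
    {G : Type*} [Group G] {Ω : Type*} [Finite Ω] [MulAction G Ω]
    [FaithfulSMul G Ω] [MulAction.IsPretransitive G Ω]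
    {n : ℕ} (hΩ : Nat.card Ω = p ^ n)
    (Q : Subgroup G) (hQn : Q.Normal) (hQp : IsPGroup q Q) : Q = ⊥ := by
  have hndvd : ¬ q ∣ Nat.card Ω := by
    rw [hΩ]
    intro hdvd
    exact hne ((Nat.prime_dvd_prime_iff_eq hq hp).mp (hq.dvd_of_dvd_pow hdvd))
  haveI : Fact q.Prime := ⟨hq⟩
  obtain ⟨a, ha⟩ := hQp.nonempty_fixed_point_of_prime_not_dvd_card Ω hndvd
  rw [MulAction.mem_fixedPoints] at ha
  -- `a` is fixed by all of `Q`; by normality and transitivity, every point is fixed.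
  rw [eq_bot_iff]
  intro g hg
  have hfix : ∀ b : Ω, g • b = b := by
    intro b
    obtain ⟨h, rfl⟩ := MulAction.exists_smul_eq G a b
    have h1 : (h⁻¹ * g * h) ∈ Q := by
      have := hQn.conj_mem g hg h⁻¹
      simpa using this
    have h2 : (⟨h⁻¹ * g * h, h1⟩ : Q) • a = a := ha ⟨h⁻¹ * g * h, h1⟩
    have h3 : (h⁻¹ * g * h) • a = a := h2
    calc g • h • a = h • (h⁻¹ * g * h) • a := by
          rw [smul_smul, smul_smul]
          congr 1
          group
      _ = h • a := by rw [h3]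
  have : g = 1 := by
    apply FaithfulSMul.eq_of_smul_eq_smul (α := Ω)
    intro b
    rw [one_smul]
    exact hfix b
  simp [this, Subgroup.mem_bot]

/-- In a finite group acting faithfully and transitively on a set of `p`-power size,
every nilpotent normal subgroup is a `p`-group. -/
theorem aux_nilpotent_normal_isPGroup {p : ℕ} (hp : p.Prime) {G : Type*} [Group G] [Finite G]
    {Ω : Type*} [Finite Ω] [MulAction G Ω] [FaithfulSMul G Ω]
    [MulAction.IsPretransitive G Ω] {n : ℕ} (hΩ : Nat.card Ω = p ^ n)
    (M : Subgroup G) (hMn : M.Normal) (hMnil : Group.IsNilpotent M) :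
    IsPGroup p M := by
  have hM : Nat.card M ≠ 0 := Nat.card_pos.ne'
  suffices h : ∀ r ∈ (Nat.card M).primeFactorsList, r = p by
    obtain ⟨l, hl⟩ : ∃ l, Nat.card M = p ^ l := by
      rw [← Nat.prod_primeFactorsList hM, List.eq_replicate_of_mem h, List.prod_replicate]
      exact ⟨_, rfl⟩
    exact IsPGroup.of_card hl
  intro q hqmem
  obtain ⟨hq, hqdvd⟩ := (Nat.mem_primeFactorsList hM).mp hqmem
  by_contra hne
  haveI : Fact q.Prime := ⟨hq⟩
  -- Cauchy: find an element of order `q` in `M`.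
  obtain ⟨y, hy⟩ := exists_prime_orderOf_dvd_card' q hqdvd
  -- The Sylow `q`-subgroup of `M` is normal (nilpotency), hence characteristic,
  -- hence its image in `G` is normal.
  obtain ⟨P, hyP⟩ := (IsPGroup.of_card (n := 1)
    (by rw [Nat.card_zpowers, hy, pow_one]) : IsPGroup q (Subgroup.zpowers y)).exists_le_sylow
  have h34 := (isNilpotent_of_finite_tfae (G := ↥M)).out 0 3
  have hPnormal : (P : Subgroup M).Normal := h34.mp hMnil q ⟨hq⟩ P
  haveI := hPnormal
  haveI : (P : Subgroup M).Characteristic := Sylow.characteristic_of_normal P hPnormal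
  haveI := hMn
  have hKnormal : ((P : Subgroup M).map M.subtype).Normal :=
    ConjAct.normal_of_characteristic_of_normal
  have hKq : IsPGroup q ((P : Subgroup M).map M.subtype) := P.2.map M.subtype
  have hKbot := aux_normal_qgroup_eq_bot hp hq hne hΩ _ hKnormal hKq
  have hyK : (y : G) ∈ (P : Subgroup M).map M.subtype :=
    ⟨y, hyP (Subgroup.mem_zpowers y), rfl⟩
  rw [hKbot, Subgroup.mem_bot] at hyK
  have : y = 1 := Subtype.ext hyK
  rw [this, orderOf_one] at hy
  exact hq.one_lt.ne hy

/-- Let `p` be a prime and let `X 1, ..., X t` be finite groups, each acting faithfully and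
transitively on a finite set of `p`-power size.  If `D` is a subdirect subgroup of
`∏ i, X i`, then the Fitting subgroup of `D` is a (possibly trivial) `p`-group. -/
theorem stmt4 {p : ℕ} (hp : p.Prime) {t : ℕ}
    (X : Fin t → Type*) [∀ i, Group (X i)] [∀ i, Finite (X i)]
    (Ω : Fin t → Type*) [∀ i, Finite (Ω i)]
    [∀ i, MulAction (X i) (Ω i)]
    (hfaithful : ∀ i, FaithfulSMul (X i) (Ω i))
    (htrans : ∀ i, MulAction.IsPretransitive (X i) (Ω i))
    (hcard : ∀ i, ∃ n : ℕ, Nat.card (Ω i) = p ^ n)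
    (D : Subgroup (∀ i, X i))
    (hsub : ∀ i, D.map (Pi.evalMonoidHom X i) = ⊤) :
    IsPGroup p (fittingSubgroup D) := by
  haveI : Fact p.Prime := ⟨hp⟩
  -- The `p`-core of each factor: the intersection of all Sylow `p`-subgroups.
  set Op : ∀ i, Subgroup (X i) := fun i => ⨅ (P : Sylow p (X i)), (P : Subgroup (X i)) with hOpdef
  have hOpP : ∀ i, IsPGroup p (Op i) := by
    intro i
    obtain ⟨P⟩ : Nonempty (Sylow p (X i)) := inferInstance
    exact IsPGroup.to_le P.isPGroup' (iInf_le _ P)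
  -- Every normal `p`-subgroup is contained in the `p`-core.
  have hle : ∀ i, ∀ Q : Subgroup (X i), Q.Normal → IsPGroup p Q → Q ≤ Op i := by
    intro i Q hQn hQp
    refine le_iInf fun P => ?_
    obtain ⟨P₀, hQP₀⟩ := hQp.exists_le_sylow
    obtain ⟨g, hg⟩ := MulAction.exists_smul_eq (X i) P₀ P
    intro x hx
    rw [← hg]
    show x ∈ (↑(g • P₀) : Subgroup (X i))
    rw [Sylow.coe_subgroup_smul, Subgroup.mem_pointwise_smul_iff_inv_smul_mem]
    refine hQP₀ ?_
    have := hQn.conj_mem x hx g⁻¹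
    simpa [MulAut.smul_def] using this
  -- Key: the Fitting subgroup of `D` maps into each `p`-core.
  have key : fittingSubgroup D ≤ (Subgroup.pi Set.univ Op).comap D.subtype := by
    refine iSup_le fun N => iSup_le fun hN => ?_
    obtain ⟨hNnorm, hNnil⟩ := hN
    intro x hx
    refine Subgroup.mem_comap.mpr ((Subgroup.mem_pi Set.univ).mpr fun i _ => ?_)
    haveI := hfaithful i
    haveI := htrans i
    obtain ⟨n, hn⟩ := hcard i
    set π : D →* X i := (Pi.evalMonoidHom X i).comp D.subtype with hπdef
    have hπsurj : Function.Surjective π := by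
      rw [← MonoidHom.range_eq_top, hπdef, MonoidHom.range_comp, Subgroup.range_subtype]
      exact hsub i
    have hMnorm : (N.map π).Normal := hNnorm.map π hπsurj
    have hMnil : Group.IsNilpotent (N.map π) :=
      nilpotent_of_surjective (π.subgroupMap N) (π.subgroupMap_surjective N)
    have hMp : IsPGroup p (N.map π) :=
      aux_nilpotent_normal_isPGroup hp hn (N.map π) hMnorm hMnil
    exact hle i (N.map π) hMnorm hMp ⟨x, hx, rfl⟩
  -- Conclude elementwise.
  intro g
  have hg : ∀ i, ((g : D) : ∀ j, X j) i ∈ Op i := by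
    intro i
    have := key g.2
    exact ((Subgroup.mem_pi Set.univ).mp (Subgroup.mem_comap.mp this)) i (Set.mem_univ i)
  have hk : ∀ i, ∃ k : ℕ, (((g : D) : ∀ j, X j) i) ^ p ^ k = 1 := by
    intro i
    obtain ⟨k, hk⟩ := hOpP i ⟨_, hg i⟩
    refine ⟨k, ?_⟩
    have := congrArg (Subtype.val) hk
    simpa using this
  choose k hkspec using hk
  classical
  refine ⟨Finset.univ.sup k, ?_⟩
  have : (((g : D) : ∀ j, X j)) ^ p ^ Finset.univ.sup k = 1 := by
    funext i
    have hle' : k i ≤ Finset.univ.sup k := Finset.le_sup (Finset.mem_univ i)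
    have : p ^ Finset.univ.sup k = p ^ k i * p ^ (Finset.univ.sup k - k i) := by
      rw [← pow_add, Nat.add_sub_cancel' hle']
    rw [Pi.pow_apply, this, pow_mul, hkspec i, one_pow]
    rfl
  exact Subtype.ext (Subtype.ext this)
end

section
/- Let G be a finite group acting transitively on Ω = {1, ..., s} with point stabiliser M, and suppose M is not contained in any proper normal subgroup of G (equivalently, the normal closure of M in G is G). Let p be a prime and let V = F_p^s be the permutation module of G over F_p. Then the only 1-dimensional F_p[G]-submodule of V is the trivial submodule {(y, y, ..., y) : y ∈ F_p}. -/
/-- Let `G` be a finite group acting transitively on a finite set `Ω`, with a point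
stabiliser `M = G_ω` not contained in any proper normal subgroup of `G`.  Let `p` be a
prime and `V = (ZMod p)^Ω` the permutation module over `F_p`.  Then the only
`1`-dimensional `G`-invariant submodule of `V` is the submodule of constant functions. -/
theorem stmt7 {p : ℕ} [Fact p.Prime] (G : Type*) [Group G] [Finite G]
    (Ω : Type*) [Fintype Ω] [MulAction G Ω] [MulAction.IsPretransitive G Ω]
    (ω : Ω)
    (hM : ∀ N : Subgroup G, N.Normal → MulAction.stabilizer G ω ≤ N → N = ⊤)
    (U : Submodule (ZMod p) (Ω → ZMod p))
    (hUinv : ∀ g : G, ∀ v ∈ U, (fun α : Ω => v (g⁻¹ • α)) ∈ U)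
    (hU1 : Module.finrank (ZMod p) U = 1) :
    U = Submodule.span (ZMod p) {(fun _ => 1 : Ω → ZMod p)} := by
  obtain ⟨v₀, hv₀ne, hgen⟩ := finrank_eq_one_iff'.mp hU1
  set v : Ω → ZMod p := (v₀ : Ω → ZMod p) with hvdef
  have hvU : v ∈ U := v₀.2
  have hvne : v ≠ 0 := fun h => hv₀ne (Subtype.ext h)
  -- every element of U is a multiple of v
  have hscal : ∀ w ∈ U, ∃ c : ZMod p, w = c • v := by
    intro w hw
    obtain ⟨c, hc⟩ := hgen ⟨w, hw⟩
    exact ⟨c, congrArg Subtype.val hc.symm⟩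
  -- for each g, there is a scalar with v (g⁻¹ • α) = c * v α
  have hchar : ∀ g : G, ∃ c : ZMod p, ∀ α : Ω, v (g⁻¹ • α) = c * v α := by
    intro g
    obtain ⟨c, hc⟩ := hscal _ (hUinv g v hvU)
    exact ⟨c, fun α => congrFun hc α⟩
  -- v ω ≠ 0
  have hvω : v ω ≠ 0 := by
    intro h0
    apply hvne
    funext α
    obtain ⟨g, hg⟩ := MulAction.exists_smul_eq G ω α
    obtain ⟨c, hc⟩ := hchar g⁻¹
    have := hc ω
    rw [inv_inv, hg] at this
    simp [this, h0]
  -- the subgroup of g fixing v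
  let N : Subgroup G :=
    { carrier := {g : G | ∀ α : Ω, v (g⁻¹ • α) = v α}
      one_mem' := by intro α; simp
      mul_mem' := by
        intro a b ha hb α
        have : (a * b)⁻¹ • α = b⁻¹ • a⁻¹ • α := by rw [mul_inv_rev, mul_smul]
        rw [this, hb, ha]
      inv_mem' := by
        intro a ha α
        have := ha (a • α)
        rw [inv_smul_smul] at this
        simp only [inv_inv]
        exact this.symm }
  have hmemN : ∀ g : G, g ∈ N ↔ ∀ α : Ω, v (g⁻¹ • α) = v α := fun g => Iff.rfl
  -- N is normal
  have hNnormal : N.Normal := by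
    constructor
    intro n hn g α
    obtain ⟨c, hc⟩ := hchar g
    obtain ⟨c', hc'⟩ := hchar g⁻¹
    simp only [inv_inv] at hc'
    have hcc' : ∀ β : Ω, c * (c' * v β) = v β := by
      intro β
      have h := hc (g • β)
      rw [inv_smul_smul, hc' β] at h
      exact h.symm
    have hkey : (g * n * g⁻¹)⁻¹ • α = g • n⁻¹ • g⁻¹ • α := by
      simp [mul_smul, mul_inv_rev]
    rw [hkey, hc' (n⁻¹ • g⁻¹ • α), hn (g⁻¹ • α), hc α]
    have := hcc' α
    linear_combination this
  -- stabilizer ≤ N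
  have hMN : MulAction.stabilizer G ω ≤ N := by
    intro g hg
    obtain ⟨c, hc⟩ := hchar g
    have hgω : g⁻¹ • ω = ω := by
      rw [inv_smul_eq_iff, MulAction.mem_stabilizer_iff.mp hg]
    have : v ω = c * v ω := by rw [← hc ω, hgω]
    have hc1 : c = 1 := by
      have h' : c * v ω = 1 * v ω := by rw [one_mul, ← this]
      exact mul_right_cancel₀ hvω h'
    intro α
    rw [hc α, hc1, one_mul]
  have hNtop : N = ⊤ := hM N hNnormal hMN
  -- v is constant
  have hconst : ∀ α : Ω, v α = v ω := by
    intro α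
    obtain ⟨g, hg⟩ := MulAction.exists_smul_eq G ω α
    have hgN : g ∈ N := hNtop ▸ Subgroup.mem_top g
    have := (hmemN g).mp hgN (g • ω)
    rw [inv_smul_smul, hg] at this
    exact this.symm
  have hveq : v = (v ω) • (fun _ => 1 : Ω → ZMod p) := by
    funext α; simp [hconst α]
  -- conclude
  have hUspan : U = Submodule.span (ZMod p) {v} := by
    apply le_antisymm
    · intro w hw
      obtain ⟨c, hc⟩ := hscal w hw
      rw [hc]
      exact Submodule.smul_mem _ _ (Submodule.mem_span_singleton_self v)
    · rw [Submodule.span_le, Set.singleton_subset_iff]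
      exact hvU
  rw [hUspan, hveq]
  exact Submodule.span_singleton_smul_eq (IsUnit.mk0 _ hvω) _
end

section
/- Let G ≤ Sym(Ω) with Ω finite, and suppose Ω is the disjoint union of two G-invariant subsets Γ and Δ. Assume that G = G_γ G_δ for all γ ∈ Γ and δ ∈ Δ. Then for any g, h ∈ G, the permutation x of Ω defined by x|_Γ = g|_Γ and x|_Δ = h|_Δ lies in the 2-closure G^{(2),Ω}; that is, G^Γ × G^Δ ≤ G^{(2),Ω}. -/
/-- The 2-closure of a set `S` of permutations of `Ω`: all permutations `x` such that for
every pair `(α, β)` the pair `(x α, x β)` lies in the `S`-orbit of `(α, β)`. -/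
def twoClosure {Ω : Type*} (S : Set (Equiv.Perm Ω)) : Set (Equiv.Perm Ω) :=
  {x | ∀ α β : Ω, ∃ g ∈ S, x α = g α ∧ x β = g β}

/-- Wielandt's dissection theorem, (b) ⇒ (a): if `Ω` is the disjoint union of two
`G`-invariant sets `Γ` and `Δ` and `G = G_γ G_δ` for all `γ ∈ Γ`, `δ ∈ Δ`, then any
permutation agreeing with some `g ∈ G` on `Γ` and with some `h ∈ G` on `Δ` lies in the
2-closure of `G`; that is, `G^Γ × G^Δ ≤ G^{(2),Ω}`. -/
theorem stmt9 {Ω : Type*} [Finite Ω] (G : Subgroup (Equiv.Perm Ω))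
    (Γ Δ : Set Ω) (hdisj : Disjoint Γ Δ) (hunion : Γ ∪ Δ = Set.univ)
    (hΓinv : ∀ g ∈ G, ∀ α ∈ Γ, (g : Equiv.Perm Ω) α ∈ Γ)
    (hΔinv : ∀ g ∈ G, ∀ α ∈ Δ, (g : Equiv.Perm Ω) α ∈ Δ)
    (hfact : ∀ γ ∈ Γ, ∀ δ ∈ Δ, ∀ g' ∈ G, ∃ a ∈ G, ∃ b ∈ G,
      a γ = γ ∧ b δ = δ ∧ g' = a * b)
    (g h : Equiv.Perm Ω) (hg : g ∈ G) (hh : h ∈ G)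
    (x : Equiv.Perm Ω)
    (hxΓ : ∀ α ∈ Γ, x α = g α) (hxΔ : ∀ α ∈ Δ, x α = h α) :
    x ∈ twoClosure (G : Set (Equiv.Perm Ω)) := by
  intro α β
  have hmem : ∀ ω : Ω, ω ∈ Γ ∪ Δ := fun ω => hunion ▸ Set.mem_univ ω
  rcases hmem α with hα | hα
  · rcases hmem β with hβ | hβ
    · exact ⟨g, hg, hxΓ α hα, hxΓ β hβ⟩
    · -- α ∈ Γ, β ∈ Δ : factor g⁻¹ h = a b with a α = α, b β = β; k = g*a = h*b⁻¹
      obtain ⟨a, ha, b, hb, haα, hbβ, hab⟩ :=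
        hfact α hα β hβ (g⁻¹ * h) (mul_mem (inv_mem hg) hh)
      refine ⟨g * a, mul_mem hg ha, ?_, ?_⟩
      · simp [hxΓ α hα, Equiv.Perm.mul_apply, haα]
      · have hk : g * a = h * b⁻¹ := by
          have : g * (a * b) = h := by rw [← hab]; group
          rw [← this]; group
        rw [hxΔ β hβ, hk]
        have : b⁻¹ β = β := by
          conv_lhs => rw [← hbβ]
          simp
        simp [Equiv.Perm.mul_apply, this]
  · rcases hmem β with hβ | hβ
    · -- α ∈ Δ, β ∈ Γ : factor g⁻¹ h = a b with a β = β, b α = α; k = h*b⁻¹ = g*a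
      obtain ⟨a, ha, b, hb, haβ, hbα, hab⟩ :=
        hfact β hβ α hα (g⁻¹ * h) (mul_mem (inv_mem hg) hh)
      refine ⟨h * b⁻¹, mul_mem hh (inv_mem hb), ?_, ?_⟩
      · have : b⁻¹ α = α := by
          conv_lhs => rw [← hbα]
          simp
        simp [hxΔ α hα, Equiv.Perm.mul_apply, this]
      · have hk : h * b⁻¹ = g * a := by
          have : g * (a * b) = h := by rw [← hab]; group
          rw [← this]; group
        rw [hxΓ β hβ, hk]
        simp [Equiv.Perm.mul_apply, haβ]
    · exact ⟨h, hh, hxΔ α hα, hxΔ β hβ⟩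
end

section
/- Let G ≤ Sym(Ω) be transitive on a finite set Ω, let X = G^{(2),Ω}, and let Σ be a G-invariant partition of Ω. Then Σ is also X-invariant, and the permutation group X^Σ induced by X on Σ satisfies X^Σ ≤ (G^Σ)^{(2),Σ}. -/
namespace twoClosure

variable {Ω : Type*}

theorem inv_mem {G : Subgroup (Equiv.Perm Ω)} {x : Equiv.Perm Ω}
    (hx : x ∈ twoClosure (G : Set (Equiv.Perm Ω))) :
    x⁻¹ ∈ twoClosure (G : Set (Equiv.Perm Ω)) := by
  intro α β
  obtain ⟨g, hg, hgα, hgβ⟩ := hx (x⁻¹ α) (x⁻¹ β)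
  refine ⟨g⁻¹, G.inv_mem hg, ?_, ?_⟩
  · exact Equiv.Perm.eq_inv_iff_eq.2 (hgα.symm.trans (x.apply_symm_apply α))
  · exact Equiv.Perm.eq_inv_iff_eq.2 (hgβ.symm.trans (x.apply_symm_apply β))

variable {P : Set (Set Ω)}

theorem image_subset_of_mem {S : Set (Equiv.Perm Ω)} (hpart : Setoid.IsPartition P)
    (hinv : ∀ g ∈ S, ∀ B ∈ P, ⇑g '' B ∈ P) {x : Equiv.Perm Ω} (hx : x ∈ twoClosure S)
    {B C : Set Ω} (hB : B ∈ P) (hC : C ∈ P) {α : Ω} (hαB : α ∈ B) (hαC : x α ∈ C) :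
    x '' B ⊆ C := by
  rintro _ ⟨β, hβ, rfl⟩
  obtain ⟨g, hg, hgα, hgβ⟩ := hx α β
  have hgB : ⇑g '' B = C :=
    Setoid.eq_of_mem_eqv_class hpart.2 (hinv g hg B hB) ⟨α, hαB, hgα.symm⟩ hC hαC
  exact hgβ ▸ hgB ▸ Set.mem_image_of_mem g hβ

theorem image_eq_of_mem {G : Subgroup (Equiv.Perm Ω)} (hpart : Setoid.IsPartition P)
    (hinv : ∀ g ∈ G, ∀ B ∈ P, ⇑(g : Equiv.Perm Ω) '' B ∈ P) {x : Equiv.Perm Ω}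
    (hx : x ∈ twoClosure (G : Set (Equiv.Perm Ω)))
    {B C : Set Ω} (hB : B ∈ P) (hC : C ∈ P) {α : Ω} (hαB : α ∈ B) (hαC : x α ∈ C) :
    x '' B = C := by
  refine (image_subset_of_mem hpart hinv hx hB hC hαB hαC).antisymm ?_
  have hback : ⇑x⁻¹ '' C ⊆ B := image_subset_of_mem hpart hinv (inv_mem hx)
    hC hB hαC (by simpa using hαB)
  exact (x.symm_image_subset B C).1 hback

theorem image_mem {G : Subgroup (Equiv.Perm Ω)} (hpart : Setoid.IsPartition P)
    (hinv : ∀ g ∈ G, ∀ B ∈ P, ⇑(g : Equiv.Perm Ω) '' B ∈ P) {x : Equiv.Perm Ω}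
    (hx : x ∈ twoClosure (G : Set (Equiv.Perm Ω))) {B : Set Ω} (hB : B ∈ P) :
    x '' B ∈ P := by
  obtain ⟨α, hα⟩ := Setoid.nonempty_of_mem_partition hpart hB
  obtain ⟨C, ⟨hC, hxαC⟩, -⟩ := hpart.2 (x α)
  exact image_eq_of_mem hpart hinv hx hB hC hα hxαC ▸ hC

end twoClosure

theorem stmt12_general {Ω : Type*} (G : Subgroup (Equiv.Perm Ω))
    (P : Set (Set Ω)) (hpart : Setoid.IsPartition P)
    (hinv : ∀ g ∈ G, ∀ B ∈ P, ⇑(g : Equiv.Perm Ω) '' B ∈ P) :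
    (∀ x ∈ twoClosure (G : Set (Equiv.Perm Ω)), ∀ B ∈ P, ⇑x '' B ∈ P) ∧
    (∀ x ∈ twoClosure (G : Set (Equiv.Perm Ω)), ∀ B ∈ P, ∀ C ∈ P,
      ∃ g ∈ G, ⇑(g : Equiv.Perm Ω) '' B = ⇑x '' B ∧ ⇑(g : Equiv.Perm Ω) '' C = ⇑x '' C) := by
  refine ⟨fun x hx B hB => twoClosure.image_mem hpart hinv hx hB, fun x hx B hB C hC => ?_⟩
  obtain ⟨α, hα⟩ := Setoid.nonempty_of_mem_partition hpart hB
  obtain ⟨β, hβ⟩ := Setoid.nonempty_of_mem_partition hpart hC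
  obtain ⟨g, hg, hgα, hgβ⟩ := hx α β
  refine ⟨g, hg, ?_, ?_⟩
  · exact (twoClosure.image_eq_of_mem hpart hinv hx hB (hinv g hg B hB) hα
      ⟨α, hα, hgα.symm⟩).symm
  · exact (twoClosure.image_eq_of_mem hpart hinv hx hC (hinv g hg C hC) hβ
      ⟨β, hβ, hgβ.symm⟩).symm

/-- Let `G ≤ Sym(Ω)` be transitive on the finite set `Ω`, `X = G^{(2),Ω}`, and let `P` be a
`G`-invariant partition of `Ω`.  Then `P` is `X`-invariant, and the group induced by `X` on
`P` is contained in the 2-closure of the group induced by `G` on `P` (membership in the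
latter 2-closure being expressed, via Wielandt's criterion, by agreement on every pair of
blocks with some element of `G`). -/
theorem stmt12 {Ω : Type*} [Finite Ω] (G : Subgroup (Equiv.Perm Ω))
    (htrans : ∀ α β : Ω, ∃ g ∈ G, (g : Equiv.Perm Ω) α = β)
    (P : Set (Set Ω)) (hpart : Setoid.IsPartition P)
    (hinv : ∀ g ∈ G, ∀ B ∈ P, ⇑(g : Equiv.Perm Ω) '' B ∈ P) :
    (∀ x ∈ twoClosure (G : Set (Equiv.Perm Ω)), ∀ B ∈ P, ⇑x '' B ∈ P) ∧
    (∀ x ∈ twoClosure (G : Set (Equiv.Perm Ω)), ∀ B ∈ P, ∀ C ∈ P,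
      ∃ g ∈ G, ⇑(g : Equiv.Perm Ω) '' B = ⇑x '' B ∧ ⇑(g : Equiv.Perm Ω) '' C = ⇑x '' C) :=
  stmt12_general G P hpart hinv
end

section
/- Let G ≤ Sym(Ω) be transitive on a finite set Ω, let X = G^{(2),Ω}, let Σ be a G-invariant partition of Ω, and let B ∈ Σ. Then the group induced on B by the setwise stabiliser X_B is contained in the 2-closure (on B) of the group induced on B by the setwise stabiliser G_B; that is, X_B^B ≤ (G_B^B)^{(2),B}. -/
/-- Let `G ≤ Sym(Ω)` be transitive on the finite set `Ω`, `X = G^{(2),Ω}`, `P` a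
`G`-invariant partition and `B ∈ P`.  Then the group induced on `B` by the setwise
stabiliser `X_B` is contained in the 2-closure on `B` of the group induced by `G_B`:
every `x ∈ X` stabilising `B` setwise agrees on each pair of points of `B` with some
element of `G` stabilising `B` setwise. -/
theorem stmt13 {Ω : Type*} [Finite Ω] (G : Subgroup (Equiv.Perm Ω))
    (htrans : ∀ α β : Ω, ∃ g ∈ G, (g : Equiv.Perm Ω) α = β)
    (P : Set (Set Ω)) (hpart : Setoid.IsPartition P)
    (hinv : ∀ g ∈ G, ∀ B ∈ P, ⇑(g : Equiv.Perm Ω) '' B ∈ P)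
    (B : Set Ω) (hB : B ∈ P)
    (x : Equiv.Perm Ω) (hx : x ∈ twoClosure (G : Set (Equiv.Perm Ω)))
    (hxB : ⇑x '' B = B) :
    ∀ α ∈ B, ∀ β ∈ B, ∃ g ∈ G,
      ⇑(g : Equiv.Perm Ω) '' B = B ∧ (g : Equiv.Perm Ω) α = x α ∧ (g : Equiv.Perm Ω) β = x β := by
  intro a ha b hb
  obtain ⟨g, hgG, hga, hgb⟩ := hx a b
  refine ⟨g, hgG, ?_, hga.symm, hgb.symm⟩
  have hxa : x a ∈ B := hxB ▸ Set.mem_image_of_mem _ ha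
  have hgaB : (g : Equiv.Perm Ω) a ∈ B := hga ▸ hxa
  have hgBP : ⇑(g : Equiv.Perm Ω) '' B ∈ P := hinv g hgG B hB
  obtain ⟨c, ⟨_, _⟩, hc⟩ := hpart.2 ((g : Equiv.Perm Ω) a)
  have h1 := hc _ ⟨hgBP, Set.mem_image_of_mem _ ha⟩
  have h2 := hc _ ⟨hB, hgaB⟩
  rw [h1, h2]
end

section
/- Let G ≤ Sym(Ω) with Ω finite, and suppose Γ and Γ' are distinct G-orbits in Ω such that the G-actions on Γ and Γ' are permutationally equivalent via a bijection f : Γ → Γ' satisfying f(γ^g) = f(γ)^g for all γ ∈ Γ, g ∈ G. Let Ω' = Ω \ Γ. Then the 2-closure G^{(2),Ω} acts faithfully on Ω'; that is, any element of G^{(2),Ω} fixing every point of Ω' is the identity. -/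
/-- Let `G ≤ Sym(Ω)` with `Ω` finite, and suppose `Γ` and `Γ'` are distinct `G`-orbits
whose `G`-actions are permutationally equivalent via a bijection `f : Γ → Γ'` with
`f(γ^g) = f(γ)^g`.  Then the 2-closure of `G` acts faithfully on `Ω' = Ω \ Γ`: any element
of the 2-closure fixing every point outside `Γ` is the identity. -/
theorem stmt14 {Ω : Type*} [Finite Ω] (G : Subgroup (Equiv.Perm Ω))
    (Γ Γ' : Set Ω)
    (hΓ : ∃ α : Ω, Γ = {β | ∃ g ∈ G, (g : Equiv.Perm Ω) α = β})
    (hΓ' : ∃ α : Ω, Γ' = {β | ∃ g ∈ G, (g : Equiv.Perm Ω) α = β})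
    (hne : Γ ≠ Γ')
    (f : Ω → Ω) (hbij : Set.BijOn f Γ Γ')
    (hequiv : ∀ γ ∈ Γ, ∀ g ∈ G, f ((g : Equiv.Perm Ω) γ) = (g : Equiv.Perm Ω) (f γ))
    (x : Equiv.Perm Ω) (hx : x ∈ twoClosure (G : Set (Equiv.Perm Ω)))
    (hfix : ∀ α ∉ Γ, x α = α) :
    x = 1 := by
  classical
  -- orbits containing a common point are equal
  have orbit_eq : ∀ (α β : Ω), (∃ g ∈ G, (g : Equiv.Perm Ω) α = β) →
      {δ | ∃ g ∈ G, (g : Equiv.Perm Ω) α = δ} = {δ | ∃ g ∈ G, (g : Equiv.Perm Ω) β = δ} := by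
    intro α β ⟨g, hg, hgβ⟩
    ext δ
    constructor
    · rintro ⟨h, hh, rfl⟩
      exact ⟨h * g⁻¹, mul_mem hh (inv_mem hg), by
        simp [← hgβ]⟩
    · rintro ⟨h, hh, rfl⟩
      exact ⟨h * g, mul_mem hh hg, by simp [hgβ]⟩
  -- Γ and Γ' are disjoint
  have hdisj : ∀ δ ∈ Γ, δ ∉ Γ' := by
    intro δ hδ hδ'
    obtain ⟨α, rfl⟩ := hΓ
    obtain ⟨α', rfl⟩ := hΓ'
    exact hne ((orbit_eq α δ hδ).trans (orbit_eq α' δ hδ').symm)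
  -- Γ is G-invariant
  have hinv : ∀ γ ∈ Γ, ∀ g ∈ G, (g : Equiv.Perm Ω) γ ∈ Γ := by
    intro γ hγ g hg
    obtain ⟨α, rfl⟩ := hΓ
    obtain ⟨h, hh, rfl⟩ := hγ
    exact ⟨g * h, mul_mem hg hh, by simp⟩
  ext β
  simp only [Equiv.Perm.coe_one, id_eq]
  by_cases hβ : β ∈ Γ
  · obtain ⟨g, hg, hxβ, hxf⟩ := hx β (f β)
    have hfβ' : f β ∈ Γ' := hbij.1 hβ
    have hfβΓ : f β ∉ Γ := fun h => hdisj _ h hfβ'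
    have h1 : (g : Equiv.Perm Ω) (f β) = f β := by rw [← hxf, hfix _ hfβΓ]
    have h2 : f ((g : Equiv.Perm Ω) β) = f β := by rw [hequiv β hβ g hg, h1]
    have h3 : (g : Equiv.Perm Ω) β = β := hbij.2.1 (hinv β hβ g hg) hβ h2
    rw [hxβ, h3]
  · exact hfix β hβ
end

section
/- Let G ≤ Sym(Ω) with Ω finite, and suppose Γ and Γ' are distinct G-orbits such that the G-actions on Γ and Γ' are permutationally equivalent via a bijection f : Γ → Γ' with f(γ^g) = f(γ)^g for all γ ∈ Γ, g ∈ G. Let Ω' = Ω \ Γ. Then the restriction of G^{(2),Ω} to Ω' equals the 2-closure (G^{Ω'})^{(2),Ω'} of the group induced by G on Ω'. -/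
/-- Let `G ≤ Sym(Ω)` with `Ω` finite, and suppose `Γ` and `Γ'` are distinct `G`-orbits with
permutationally equivalent `G`-actions via `f : Γ → Γ'`.  Let `Ω' = Ω \ Γ = Γᶜ`.  Then
the restriction to `Ω'` of the 2-closure `G^{(2),Ω}` equals the 2-closure of the induced
group `G^{Ω'}`: a permutation `y` of `Ω'` is the restriction of some element of
`G^{(2),Ω}` if and only if on every pair of points of `Ω'` it agrees with some element
of `G`. -/
theorem stmt15 {Ω : Type*} [Finite Ω] (G : Subgroup (Equiv.Perm Ω))
    (Γ Γ' : Set Ω)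
    (hΓ : ∃ α : Ω, Γ = {β | ∃ g ∈ G, (g : Equiv.Perm Ω) α = β})
    (hΓ' : ∃ α : Ω, Γ' = {β | ∃ g ∈ G, (g : Equiv.Perm Ω) α = β})
    (hne : Γ ≠ Γ')
    (f : Ω → Ω) (hbij : Set.BijOn f Γ Γ')
    (hequiv : ∀ γ ∈ Γ, ∀ g ∈ G, f ((g : Equiv.Perm Ω) γ) = (g : Equiv.Perm Ω) (f γ))
    (y : Equiv.Perm (Γᶜ : Set Ω)) :
    (∃ x ∈ twoClosure (G : Set (Equiv.Perm Ω)), ∀ α : (Γᶜ : Set Ω), x ↑α = ↑(y α)) ↔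
    (∀ α β : (Γᶜ : Set Ω), ∃ g ∈ G,
      (g : Equiv.Perm Ω) ↑α = ↑(y α) ∧ (g : Equiv.Perm Ω) ↑β = ↑(y β)) := by
  classical
  obtain ⟨α₀, hΓeq⟩ := hΓ
  obtain ⟨α₀', hΓ'eq⟩ := hΓ'
  haveI : Nonempty Ω := ⟨α₀⟩
  constructor
  · rintro ⟨x, hx, hres⟩ α β
    obtain ⟨g, hg, h1, h2⟩ := hx ↑α ↑β
    exact ⟨g, hg, by rw [← h1, hres], by rw [← h2, hres]⟩
  · intro hy
    -- disjointness of Γ and Γ'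
    have hdisj : ∀ a ∈ Γ, a ∉ Γ' := by
      intro a ha ha'
      apply hne
      rw [hΓeq] at ha ⊢; rw [hΓ'eq] at ha' ⊢
      obtain ⟨g, hg, hga⟩ := ha
      obtain ⟨g', hg', hg'a⟩ := ha'
      have hkey : g⁻¹ (g' α₀') = α₀ := by rw [hg'a, ← hga]; simp
      ext b
      constructor
      · rintro ⟨h, hh, rfl⟩
        exact ⟨h * (g⁻¹ * g'), mul_mem hh (mul_mem (inv_mem hg) hg'),
          by simp [Equiv.Perm.mul_apply, hkey]⟩
      · rintro ⟨h, hh, rfl⟩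
        refine ⟨h * (g'⁻¹ * g), mul_mem hh (mul_mem (inv_mem hg') hg), ?_⟩
        have : g'⁻¹ (g α₀) = α₀' := by rw [hga, ← hg'a]; simp
        simp [Equiv.Perm.mul_apply, this]
    have horbΓ : ∀ a ∈ Γ, ∀ g ∈ G, g a ∈ Γ := by
      intro a ha g hg
      rw [hΓeq] at ha ⊢
      obtain ⟨h, hh, rfl⟩ := ha
      exact ⟨g * h, mul_mem hg hh, by simp⟩
    have hfmem : ∀ a ∈ Γ, f a ∈ (Γᶜ : Set Ω) := fun a ha hmem =>
      hdisj (f a) hmem (hbij.mapsTo ha)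
    set p : Ω → (Γᶜ : Set Ω) := fun a =>
      if h : a ∈ Γ then ⟨f a, hfmem a h⟩ else ⟨a, h⟩ with hp
    set F : Ω → Ω := fun a =>
      if h : a ∈ Γ then Function.invFunOn f Γ ↑(y ⟨f a, hfmem a h⟩) else ↑(y ⟨a, h⟩) with hF
    have hkey : ∀ a : Ω, ∀ g ∈ G, ↑(y (p a)) = g ↑(p a) → F a = g a := by
      intro a g hg hya
      by_cases h : a ∈ Γ
      · simp only [hp, hF, dif_pos h] at hya ⊢
        rw [hya, ← hequiv a h g hg]
        exact hbij.injOn.leftInvOn_invFunOn (horbΓ a h g hg)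
      · simp only [hp, hF, dif_neg h] at hya ⊢
        exact hya
    have hinj : Function.Injective F := by
      intro a b hab
      obtain ⟨g, hg, h1, h2⟩ := hy (p a) (p b)
      rw [hkey a g hg h1.symm, hkey b g hg h2.symm] at hab
      exact g.injective hab
    refine ⟨Equiv.ofBijective F (Finite.injective_iff_bijective.mp hinj), ?_, ?_⟩
    · intro α β
      obtain ⟨g, hg, h1, h2⟩ := hy (p α) (p β)
      exact ⟨g, hg, hkey α g hg h1.symm, hkey β g hg h2.symm⟩
    · intro α
      show F ↑α = ↑(y α)
      simp only [hF, dif_neg α.2]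
end

section
/- Let G ≤ Sym(Ω) with Ω finite, and suppose Γ and Γ' are distinct G-orbits with permutationally equivalent G-actions via f : Γ → Γ' satisfying f(γ^g) = f(γ)^g. Let Ω' = Ω \ Γ. Then G = G^{(2),Ω} if and only if G^{Ω'} = (G^{Ω'})^{(2),Ω'}. -/
open Classical in
/-- Extension of a permutation `y` of `Γᶜ` to a function on all of `Ω`, using `f` and a
partial inverse `finv` of `f` on `Γ`. -/
noncomputable def extFun {Ω : Type*} (Γ : Set Ω) (f finv : Ω → Ω)
    (hf : ∀ a, a ∈ Γ → f a ∉ Γ) (y : Equiv.Perm (Γᶜ : Set Ω)) (a : Ω) : Ω :=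
  if h : a ∈ Γ then finv ↑(y ⟨f a, hf a h⟩) else ↑(y ⟨a, h⟩)

theorem extFun_pos {Ω : Type*} (Γ : Set Ω) (f finv : Ω → Ω)
    (hf : ∀ a, a ∈ Γ → f a ∉ Γ) (y : Equiv.Perm (Γᶜ : Set Ω)) {a : Ω} (h : a ∈ Γ) :
    extFun Γ f finv hf y a = finv ↑(y ⟨f a, hf a h⟩) := dif_pos h

theorem extFun_neg {Ω : Type*} (Γ : Set Ω) (f finv : Ω → Ω)
    (hf : ∀ a, a ∈ Γ → f a ∉ Γ) (y : Equiv.Perm (Γᶜ : Set Ω)) {a : Ω} (h : a ∉ Γ) :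
    extFun Γ f finv hf y a = ↑(y ⟨a, h⟩) := dif_neg h

/-- Let `G ≤ Sym(Ω)` with `Ω` finite, and suppose `Γ` and `Γ'` are distinct `G`-orbits with
permutationally equivalent `G`-actions via `f : Γ → Γ'`.  Let `Ω' = Ω \ Γ = Γᶜ`.  Then
`G` is 2-closed on `Ω` if and only if the induced group `G^{Ω'}` is 2-closed on `Ω'`
(the latter expressed as: every permutation of `Ω'` agreeing on each pair of points with
some element of `G` is itself induced by an element of `G`). -/
theorem stmt16 {Ω : Type*} [Finite Ω] (G : Subgroup (Equiv.Perm Ω))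
    (Γ Γ' : Set Ω)
    (hΓ : ∃ α : Ω, Γ = {β | ∃ g ∈ G, (g : Equiv.Perm Ω) α = β})
    (hΓ' : ∃ α : Ω, Γ' = {β | ∃ g ∈ G, (g : Equiv.Perm Ω) α = β})
    (hne : Γ ≠ Γ')
    (f : Ω → Ω) (hbij : Set.BijOn f Γ Γ')
    (hequiv : ∀ γ ∈ Γ, ∀ g ∈ G, f ((g : Equiv.Perm Ω) γ) = (g : Equiv.Perm Ω) (f γ)) :
    (twoClosure (G : Set (Equiv.Perm Ω)) = (G : Set (Equiv.Perm Ω))) ↔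
    (∀ y : Equiv.Perm (Γᶜ : Set Ω),
      (∀ α β : (Γᶜ : Set Ω), ∃ g ∈ G,
        (g : Equiv.Perm Ω) ↑α = ↑(y α) ∧ (g : Equiv.Perm Ω) ↑β = ↑(y β)) →
      ∃ g ∈ G, ∀ α : (Γᶜ : Set Ω), (g : Equiv.Perm Ω) ↑α = ↑(y α)) := by
  classical
  obtain ⟨α₀, hα₀⟩ := hΓ
  obtain ⟨α₁, hα₁⟩ := hΓ'
  have hGΓgen : ∀ (α : Ω) (g : Equiv.Perm Ω), g ∈ G →
      ∀ γ ∈ {β | ∃ h ∈ G, (h : Equiv.Perm Ω) α = β},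
        g γ ∈ {β | ∃ h ∈ G, (h : Equiv.Perm Ω) α = β} := by
    rintro α g hg γ ⟨h, hh, rfl⟩
    exact ⟨g * h, mul_mem hg hh, by simp [Equiv.Perm.mul_apply]⟩
  have hGΓ : ∀ g : Equiv.Perm Ω, g ∈ G → ∀ γ ∈ Γ, g γ ∈ Γ := by
    intro g hg γ hγ; rw [hα₀] at hγ ⊢; exact hGΓgen α₀ g hg γ hγ
  have hGΓ' : ∀ g : Equiv.Perm Ω, g ∈ G → ∀ γ ∈ Γ', g γ ∈ Γ' := by
    intro g hg γ hγ; rw [hα₁] at hγ ⊢; exact hGΓgen α₁ g hg γ hγ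
  have hGΓc : ∀ g : Equiv.Perm Ω, g ∈ G → ∀ a, a ∉ Γ → g a ∉ Γ := by
    intro g hg a ha hmem
    exact ha (by simpa using hGΓ g⁻¹ (inv_mem hg) (g a) hmem)
  have hdisj : ∀ a ∈ Γ', a ∉ Γ := by
    intro a ha' ha
    apply hne
    rw [hα₀] at ha; rw [hα₁] at ha'
    obtain ⟨g, hg, hga⟩ := ha
    obtain ⟨g', hg', hg'a⟩ := ha'
    rw [hα₀, hα₁]
    ext β
    constructor
    · rintro ⟨h, hh, rfl⟩
      exact ⟨h * g⁻¹ * g', mul_mem (mul_mem hh (inv_mem hg)) hg', by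
        simp [Equiv.Perm.mul_apply, hg'a, ← hga]⟩
    · rintro ⟨h, hh, rfl⟩
      exact ⟨h * g'⁻¹ * g, mul_mem (mul_mem hh (inv_mem hg')) hg, by
        simp [Equiv.Perm.mul_apply, hga, ← hg'a]⟩
  have hfc : ∀ a, a ∈ Γ → f a ∉ Γ := fun a h => hdisj _ (hbij.mapsTo h)
  constructor
  · -- G 2-closed on Ω ⟹ induced group 2-closed on Γᶜ
    intro h2c y hy
    have : Nonempty Ω := ⟨α₀⟩
    set finv := Function.invFunOn f Γ with hfinv
    have hinv : Set.InvOn finv f Γ Γ' := hbij.invOn_invFunOn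
    set X : Ω → Ω := extFun Γ f finv hfc y with hX
    have key : ∀ (a : Ω) (g : Equiv.Perm Ω), g ∈ G →
        (∀ h : a ∈ Γ, g (f a) = ↑(y ⟨f a, hfc a h⟩)) →
        (∀ h : a ∉ Γ, g a = ↑(y ⟨a, h⟩)) →
        X a = g a := by
      intro a g hg h1 h2
      by_cases h : a ∈ Γ
      · have e1 : f (g a) = (↑(y ⟨f a, hfc a h⟩) : Ω) := by
          rw [hequiv a h g hg]; exact h1 h
        calc X a = finv ↑(y ⟨f a, hfc a h⟩) := extFun_pos Γ f finv hfc y h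
          _ = finv (f (g a)) := by rw [e1]
          _ = g a := hinv.1 (hGΓ g hg a h)
      · rw [hX, extFun_neg Γ f finv hfc y h]
        exact (h2 h).symm
    have hP : ∀ a b : Ω, ∃ g ∈ G, X a = g a ∧ X b = g b := by
      intro a b
      obtain ⟨g, hg, e1, e2⟩ := hy
        (if ha : a ∈ Γ then ⟨f a, hfc a ha⟩ else ⟨a, ha⟩)
        (if hb : b ∈ Γ then ⟨f b, hfc b hb⟩ else ⟨b, hb⟩)
      refine ⟨g, hg, key a g hg (fun h => ?_) (fun h => ?_),
        key b g hg (fun h => ?_) (fun h => ?_)⟩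
      · rw [dif_pos h] at e1; exact e1
      · rw [dif_neg h] at e1; exact e1
      · rw [dif_pos h] at e2; exact e2
      · rw [dif_neg h] at e2; exact e2
    have hinj : Function.Injective X := by
      intro a b hab
      obtain ⟨g, hg, e1, e2⟩ := hP a b
      rw [e1, e2] at hab
      exact g.injective hab
    let xe : Equiv.Perm Ω := Equiv.ofBijective X (Finite.injective_iff_bijective.mp hinj)
    have hxe : xe ∈ twoClosure (G : Set (Equiv.Perm Ω)) := fun a b => hP a b
    rw [h2c] at hxe
    refine ⟨xe, hxe, fun a => ?_⟩
    exact extFun_neg Γ f finv hfc y a.2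
  · -- induced group 2-closed on Γᶜ ⟹ G 2-closed on Ω
    intro hind
    apply subset_antisymm
    · intro x hx
      have hxc : ∀ a : (Γᶜ : Set Ω), x ↑a ∈ (Γᶜ : Set Ω) := by
        intro a
        obtain ⟨g, hg, e, _⟩ := hx ↑a ↑a
        rw [e]
        exact hGΓc g hg _ a.2
      have hinjY : Function.Injective
          (fun a : (Γᶜ : Set Ω) => (⟨x ↑a, hxc a⟩ : (Γᶜ : Set Ω))) := by
        intro a b h
        exact Subtype.ext (x.injective (congrArg Subtype.val h))
      let ye : Equiv.Perm (Γᶜ : Set Ω) :=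
        Equiv.ofBijective _ (Finite.injective_iff_bijective.mp hinjY)
      obtain ⟨g, hg, hgy⟩ := hind ye (by
        intro a b
        obtain ⟨g, hg, e1, e2⟩ := hx ↑a ↑b
        exact ⟨g, hg, e1.symm, e2.symm⟩)
      have hxg : x = g := by
        apply Equiv.ext
        intro a
        by_cases h : a ∈ Γ
        · obtain ⟨h', hh', e1, e2⟩ := hx a (f a)
          have hfa : f a ∈ Γ' := hbij.mapsTo h
          have exg : x (f a) = g (f a) := (hgy ⟨f a, hdisj _ hfa⟩).symm
          have e3 : f (x a) = x (f a) := by rw [e1, e2, hequiv a h h' hh']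
          have e4 : f (g a) = g (f a) := hequiv a h g hg
          have efin : f (x a) = f (g a) := by rw [e3, exg, e4]
          refine hbij.injOn ?_ (hGΓ g hg a h) efin
          rw [e1]; exact hGΓ h' hh' a h
        · exact (hgy ⟨a, h⟩).symm
      rw [hxg]
      exact hg
    · intro g hg a b
      exact ⟨g, hg, rfl, rfl⟩
end
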